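/- arXiv:1305.2870 — 6 statements merged into one kernel-verified Lean document; each statement's English description precedes it below -/
import Mathlib

section
/- (Osgood criterion, autonomous case) Let b:ℝ→(0,∞) be continuous, positive, locally Lipschitz and non-decreasing, and let x₀ ∈ ℝ. The maximal solution of y'(t) = b(y(t)), y(0) = x₀, explodes in finite time if and only if ∫_{x₀}^∞ ds/b(s) < ∞; and in the case of explosion, the explosion time equals ∫_{x₀}^∞ ds/b(s). -/
open MeasureTheory Set Filter Topology intervalIntegral

private noncomputable def Fo (b : ℝ → ℝ) (x₀ : ℝ) : ℝ → ℝ := fun x => ∫ s in x₀..x, 1 / b s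

private lemma hc_cont {b : ℝ → ℝ} (hb_cont : Continuous b) (hb_pos : ∀ x, 0 < b x) :
    Continuous (fun s => 1 / b s) :=
  continuous_const.div hb_cont (fun x => (hb_pos x).ne')

private lemma Fo_hasDeriv {b : ℝ → ℝ} (hb_cont : Continuous b) (hb_pos : ∀ x, 0 < b x)
    (x₀ x : ℝ) : HasDerivAt (Fo b x₀) (1 / b x) x :=
  intervalIntegral.integral_hasDerivAt_right
    ((hc_cont hb_cont hb_pos).intervalIntegrable _ _)
    ((hc_cont hb_cont hb_pos).stronglyMeasurableAtFilter _ _)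
    (hc_cont hb_cont hb_pos).continuousAt

private lemma Fo_strictMono {b : ℝ → ℝ} (hb_cont : Continuous b) (hb_pos : ∀ x, 0 < b x)
    (x₀ : ℝ) : StrictMono (Fo b x₀) := by
  intro x y hxy
  have h : Fo b x₀ y - Fo b x₀ x = ∫ s in x..y, 1 / b s := by
    simp only [Fo]
    rw [intervalIntegral.integral_interval_sub_left
      ((hc_cont hb_cont hb_pos).intervalIntegrable _ _)
      ((hc_cont hb_cont hb_pos).intervalIntegrable _ _)]
  have hpos : 0 < ∫ s in x..y, 1 / b s :=
    intervalIntegral.intervalIntegral_pos_of_pos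
      ((hc_cont hb_cont hb_pos).intervalIntegrable _ _)
      (fun s => one_div_pos.2 (hb_pos s)) hxy
  linarith [h ▸ hpos]

private lemma Fo_x0 (b : ℝ → ℝ) (x₀ : ℝ) : Fo b x₀ x₀ = 0 := by simp [Fo]

/-- forward direction / uniqueness of explosion time -/
private lemma osgood_forward {b : ℝ → ℝ} {x₀ : ℝ} (hb_cont : Continuous b)
    (hb_pos : ∀ x, 0 < b x) {T : ℝ} (hT : 0 < T) {y : ℝ → ℝ} (hy0 : y 0 = x₀)
    (hyd : ∀ t ∈ Ico (0:ℝ) T, HasDerivAt y (b (y t)) t)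
    (hyT : Tendsto y (𝓝[<] T) atTop) :
    IntegrableOn (fun s => 1 / b s) (Ioi x₀) ∧ T = ∫ s in Ioi x₀, 1 / b s := by
  set F := Fo b x₀ with hF
  have key : ∀ t ∈ Ico (0:ℝ) T, F (y t) = t := by
    intro t ht
    have hsub : Icc (0:ℝ) t ⊆ Ico 0 T := fun s hs => ⟨hs.1, lt_of_le_of_lt hs.2 ht.2⟩
    have hderiv : ∀ s ∈ Ico (0:ℝ) t, HasDerivWithinAt (fun u => F (y u) - u) 0 (Ici s) s := by
      intro s hs
      have hds : HasDerivAt y (b (y s)) s := hyd s (hsub ⟨hs.1, hs.2.le⟩)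
      have h1 : HasDerivAt (fun u => F (y u)) (1 / b (y s) * b (y s)) s :=
        (Fo_hasDeriv hb_cont hb_pos x₀ (y s)).comp s hds
      have h2 : HasDerivAt (fun u => F (y u) - u) (1 / b (y s) * b (y s) - 1) s :=
        h1.sub (hasDerivAt_id s)
      have h3 : 1 / b (y s) * b (y s) - 1 = 0 := by
        rw [one_div, inv_mul_cancel₀ (hb_pos (y s)).ne']; ring
      exact (h3 ▸ h2).hasDerivWithinAt
    have hcont : ContinuousOn (fun u => F (y u) - u) (Icc 0 t) := by
      intro s hs
      have hds : HasDerivAt y (b (y s)) s := hyd s (hsub hs)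
      exact (((Fo_hasDeriv hb_cont hb_pos x₀ (y s)).comp s hds).sub
        (hasDerivAt_id s)).continuousAt.continuousWithinAt
    have := constant_of_has_deriv_right_zero hcont hderiv t (right_mem_Icc.2 ht.1)
    simp only [hy0] at this
    rw [hF, Fo_x0] at this; linarith
  have hev : ∀ᶠ t in 𝓝[<] T, F (y t) = t ∧ x₀ ≤ y t := by
    filter_upwards [Ioo_mem_nhdsLT hT, self_mem_nhdsWithin] with t ht ht'
    have htI : t ∈ Ico (0:ℝ) T := ⟨ht.1.le, ht'⟩
    refine ⟨key t htI, ?_⟩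
    by_contra h
    push_neg at h
    have h2 := Fo_strictMono hb_cont hb_pos x₀ h
    rw [Fo_x0] at h2
    have h3 := key t htI
    rw [hF] at h3
    linarith [ht.1]
  haveI hne : (𝓝[<] T).NeBot := nhdsLT_neBot T
  have hint : IntegrableOn (fun s => 1 / b s) (Ioi x₀) := by
    refine integrableOn_Ioi_of_intervalIntegral_norm_bounded T x₀
      (fun t => ((hc_cont hb_cont hb_pos).integrableOn_Ioc (a := x₀) (b := y t)))
      hyT ?_
    filter_upwards [hev, self_mem_nhdsWithin] with t ht ht'
    have heq : (∫ x in x₀..y t, ‖1 / b x‖) = F (y t) := by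
      apply intervalIntegral.integral_congr
      intro s _
      exact abs_of_nonneg (one_div_pos.2 (hb_pos s)).le
    rw [heq, ht.1]
    exact le_of_lt ht'
  refine ⟨hint, ?_⟩
  have h1 : Tendsto (fun t => ∫ x in x₀..y t, 1 / b x) (𝓝[<] T)
      (𝓝 (∫ s in Ioi x₀, 1 / b s)) :=
    intervalIntegral_tendsto_integral_Ioi x₀ hint hyT
  have h2 : Tendsto (fun t => ∫ x in x₀..y t, 1 / b x) (𝓝[<] T) (𝓝 T) := by
    have hid : Tendsto (fun t : ℝ => t) (𝓝[<] T) (𝓝 T) :=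
      tendsto_id.mono_left nhdsWithin_le_nhds
    refine hid.congr' ?_
    filter_upwards [hev] with t ht
    exact ht.1.symm
  exact tendsto_nhds_unique h2 h1

private lemma osgood_exists {b : ℝ → ℝ} {x₀ : ℝ} (hb_cont : Continuous b)
    (hb_pos : ∀ x, 0 < b x) (hint : IntegrableOn (fun s => 1 / b s) (Ioi x₀)) :
    ∃ T : ℝ, 0 < T ∧ T = ∫ s in Ioi x₀, 1 / b s ∧ ∃ y : ℝ → ℝ, y 0 = x₀ ∧
      (∀ t ∈ Ico (0:ℝ) T, HasDerivAt y (b (y t)) t) ∧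
      Tendsto y (𝓝[<] T) atTop := by
  classical
  set F := Fo b x₀ with hF
  set T := ∫ s in Ioi x₀, 1 / b s with hTdef
  have hFmono : StrictMono F := Fo_strictMono hb_cont hb_pos x₀
  have hFcont : Continuous F := continuous_iff_continuousAt.2
    (fun x => (Fo_hasDeriv hb_cont hb_pos x₀ x).continuousAt)
  have hFtop : Tendsto F atTop (𝓝 T) := by
    have := intervalIntegral_tendsto_integral_Ioi x₀ hint (tendsto_id (x := atTop))
    exact this
  have hFle : ∀ x, F x ≤ T := by
    intro x
    refine ge_of_tendsto hFtop ?_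
    filter_upwards [eventually_ge_atTop x] with z hz
    exact hFmono.monotone hz
  have hFlt : ∀ x, F x < T := fun x => lt_of_lt_of_le (hFmono (lt_add_one x)) (hFle (x + 1))
  have hFx0 : F x₀ = 0 := Fo_x0 b x₀
  have hT : 0 < T := hFx0 ▸ hFlt x₀
  -- the inverse function
  set y : ℝ → ℝ := fun t => if h : ∃ x, F x = t then h.choose else 0 with hy
  have hyF : ∀ t, (∃ x, F x = t) → F (y t) = t := by
    intro t h
    simp only [hy, dif_pos h]
    exact h.choose_spec
  have attain : ∀ t, 0 ≤ t → t < T → ∃ x, F x = t := by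
    intro t ht0 htT
    obtain ⟨X, hX1, hX2⟩ : ∃ X, x₀ ≤ X ∧ t < F X := by
      have h1 : ∀ᶠ X in atTop, t < F X := hFtop.eventually (eventually_gt_nhds htT)
      obtain ⟨X, hX⟩ := (h1.and (eventually_ge_atTop x₀)).exists
      exact ⟨X, hX.2, hX.1⟩
    have := intermediate_value_Icc hX1 hFcont.continuousOn
    have ht : t ∈ Icc (F x₀) (F X) := ⟨hFx0 ▸ ht0, hX2.le⟩
    obtain ⟨x, _, hx⟩ := this ht
    exact ⟨x, hx⟩
  have attain_nbhd : ∀ t, (∃ x, F x = t) → ∀ᶠ s in 𝓝 t, ∃ x, F x = s := by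
    intro t ⟨x₁, hx₁⟩
    have hsub : Icc (F (x₁ - 1)) (F (x₁ + 1)) ⊆ F '' Icc (x₁ - 1) (x₁ + 1) :=
      intermediate_value_Icc (by linarith) hFcont.continuousOn
    filter_upwards [Ioo_mem_nhds (hx₁ ▸ hFmono (by linarith : x₁ - 1 < x₁))
      (hx₁ ▸ hFmono (by linarith : x₁ < x₁ + 1))] with s hs
    obtain ⟨x, _, hx⟩ := hsub (Ioo_subset_Icc_self hs)
    exact ⟨x, hx⟩
  have hycont : ∀ t, (∃ x, F x = t) → ContinuousAt y t := by
    intro t ht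
    rw [ContinuousAt, tendsto_order]
    constructor
    · intro l hl
      have hFl : F l < t := by
        have := hFmono hl
        rwa [hyF t ht] at this
      filter_upwards [Ioi_mem_nhds hFl, attain_nbhd t ht] with s hs hs'
      have := hyF s hs'
      by_contra h
      push_neg at h
      have := hFmono.monotone h
      rw [hyF s hs'] at this
      exact absurd (lt_of_lt_of_le hs this) (lt_irrefl _)
    · intro u hu
      have hFu : t < F u := by
        have := hFmono hu
        rwa [hyF t ht] at this
      filter_upwards [Iio_mem_nhds hFu, attain_nbhd t ht] with s hs hs'
      by_contra h
      push_neg at h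
      have := hFmono.monotone h
      rw [hyF s hs'] at this
      exact absurd (lt_of_le_of_lt this hs) (lt_irrefl _)
  have hyderiv : ∀ t, (∃ x, F x = t) → HasDerivAt y (b (y t)) t := by
    intro t ht
    have hd : HasDerivAt y (1 / b (y t))⁻¹ t := by
      refine HasDerivAt.of_local_left_inverse (hycont t ht)
        (Fo_hasDeriv hb_cont hb_pos x₀ (y t)) (one_div_ne_zero (hb_pos _).ne') ?_
      filter_upwards [attain_nbhd t ht] with s hs
      exact hyF s hs
    rwa [one_div, inv_inv] at hd
  refine ⟨T, hT, rfl, y, ?_, ?_, ?_⟩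
  · have h0 : ∃ x, F x = 0 := ⟨x₀, hFx0⟩
    have := hyF 0 h0
    exact hFmono.injective (by rw [this, hFx0])
  · intro t ht
    exact hyderiv t (attain t ht.1 ht.2)
  · rw [tendsto_atTop]
    intro M
    have hlt : max (F M) 0 < T := max_lt (hFlt M) hT
    filter_upwards [Ioo_mem_nhdsLT hlt] with s hs
    have hs0 : 0 ≤ s := le_of_lt (lt_of_le_of_lt (le_max_right _ _) hs.1)
    have hatt := attain s hs0 hs.2
    have hFys := hyF s hatt
    by_contra h
    push_neg at h
    have := hFmono h
    rw [hFys] at this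
    exact absurd (lt_of_le_of_lt (le_max_left _ _) hs.1) (by linarith)

/-- Osgood criterion (autonomous case): for `b` continuous, positive, locally Lipschitz
and non-decreasing, the maximal solution of `y' = b(y)`, `y(0) = x₀` explodes in finite
time iff `∫_{x₀}^∞ ds/b(s) < ∞`, and in that case the explosion time equals this integral. -/
theorem stmt2
    (b : ℝ → ℝ) (x₀ : ℝ)
    (hb_cont : Continuous b) (hb_pos : ∀ x, 0 < b x)
    (hb_lip : LocallyLipschitz b) (hb_mono : Monotone b) :
    ((∃ T : ℝ, 0 < T ∧ ∃ y : ℝ → ℝ, y 0 = x₀ ∧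
        (∀ t ∈ Ico (0:ℝ) T, HasDerivAt y (b (y t)) t) ∧
        Tendsto y (𝓝[<] T) atTop) ↔
      IntegrableOn (fun s => 1 / b s) (Ioi x₀)) ∧
    (∀ T : ℝ, 0 < T → (∃ y : ℝ → ℝ, y 0 = x₀ ∧
        (∀ t ∈ Ico (0:ℝ) T, HasDerivAt y (b (y t)) t) ∧
        Tendsto y (𝓝[<] T) atTop) →
      T = ∫ s in Ioi x₀, 1 / b s) := by
  constructor
  · constructor
    · rintro ⟨T, hT, y, hy0, hyd, hyT⟩
      exact (osgood_forward hb_cont hb_pos hT hy0 hyd hyT).1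
    · intro hint
      obtain ⟨T, hT, _, y, hy0, hyd, hyT⟩ := osgood_exists hb_cont hb_pos hint
      exact ⟨T, hT, y, hy0, hyd, hyT⟩
  · rintro T hT ⟨y, hy0, hyd, hyT⟩
    exact (osgood_forward hb_cont hb_pos hT hy0 hyd hyT).2
end

section
/- (Osgood criterion for integral equations with forcing, necessity direction) Let a:(0,∞)→(0,∞) be continuous, b:ℝ→[0,∞) continuous with b > 0 and locally Lipschitz on (l,∞) and non-decreasing on [r,∞) (where -∞ ≤ l < ∞, r ∈ ℝ), and g:[0,∞)→ℝ continuous. Let X be the maximal solution of X_t = ξ + ∫_0^t a(s)b(X_s)ds + g(t) with explosion time T_ξ. If T_ξ < ∞ (X blows up in finite time), then ∫_r^∞ ds/b(s) < ∞. -/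
open MeasureTheory Set Filter Topology intervalIntegral

/-- Osgood criterion for integral equations with forcing (necessity): if the maximal
solution of `X_t = ξ + ∫_0^t a(s) b(X_s) ds + g(t)` blows up at a finite time `T_ξ`,
then `∫_r^∞ ds/b(s) < ∞`. -/
theorem stmt5
    (a : ℝ → ℝ) (b : ℝ → ℝ) (g : ℝ → ℝ) (l : EReal) (r ξ : ℝ)
    (ha_cont : ContinuousOn a (Ioi 0)) (ha_pos : ∀ t ∈ Ioi (0:ℝ), 0 < a t)
    (hb_cont : Continuous b) (hb_nonneg : ∀ x, 0 ≤ b x)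
    (hb_pos : ∀ x : ℝ, l < (x : EReal) → 0 < b x)
    (hb_lip : LocallyLipschitzOn {x : ℝ | l < (x : EReal)} b)
    (hb_mono : MonotoneOn b (Ici r))
    (hbr_pos : ∀ x ∈ Ici r, 0 < b x)
    (hl : l < (⊤ : EReal))
    (hg_cont : ContinuousOn g (Ici 0))
    (X : ℝ → ℝ) (Tξ : ℝ) (hTξ : 0 < Tξ)
    (hX_cont : ContinuousOn X (Ico 0 Tξ))
    (hX_eq : ∀ t ∈ Ico (0:ℝ) Tξ, X t = ξ + (∫ s in (0:ℝ)..t, a s * b (X s)) + g t)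
    (hX_blow : Tendsto X (𝓝[<] Tξ) atTop) :
    IntegrableOn (fun s => 1 / b s) (Ioi r) := by
  simp only [one_div]
  set f : ℝ → ℝ := fun s => a s * b (X s) with hf_def
  have hIoo_sub : Ioo (0:ℝ) Tξ ⊆ Ico 0 Tξ := Ioo_subset_Ico_self
  have hf_cont : ContinuousOn f (Ioo 0 Tξ) := by
    exact (ha_cont.mono (fun x hx => hx.1)).mul
      (hb_cont.comp_continuousOn (hX_cont.mono hIoo_sub))
  -- limit of g from the left at Tξ
  have hg_lim : Tendsto g (𝓝[<] Tξ) (𝓝 (g Tξ)) := by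
    have h1 : 𝓝[Ioo (0:ℝ) Tξ] Tξ = 𝓝[<] Tξ := nhdsWithin_Ioo_eq_nhdsLT hTξ
    have h2 : ContinuousWithinAt g (Ioo (0:ℝ) Tξ) Tξ :=
      (hg_cont Tξ hTξ.le).mono (fun x hx => hx.1.le)
    rwa [ContinuousWithinAt, h1] at h2
  have hIoo_mem : Ioo (0:ℝ) Tξ ∈ 𝓝[<] Tξ := by
    rw [← nhdsWithin_Ioo_eq_nhdsLT hTξ]; exact self_mem_nhdsWithin
  have hIco_mem : ∀ c : ℝ, c < Tξ → Ico c Tξ ∈ 𝓝[<] Tξ := by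
    intro c hc
    have : Ici c ∈ 𝓝 Tξ := Ici_mem_nhds hc
    exact inter_mem (mem_nhdsWithin_of_mem_nhds this) self_mem_nhdsWithin
  by_cases hcase : ∀ t ∈ Ioo (0:ℝ) Tξ, IntervalIntegrable f volume 0 t
  swap
  · -- non-integrable case: the integral is identically 0 and X = ξ + g is bounded
    push_neg at hcase
    obtain ⟨t1, ht1, hnint⟩ := hcase
    have hXg : ∀ t ∈ Ico t1 Tξ, X t = ξ + g t := by
      intro t ht
      have hni : ¬ IntervalIntegrable f volume 0 t := by
        intro hint
        have hsub : uIcc (0:ℝ) t1 ⊆ uIcc 0 t := by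
          rw [uIcc_of_le ht1.1.le, uIcc_of_le (ht1.1.le.trans ht.1)]
          exact Icc_subset_Icc_right ht.1
        exact hnint (hint.mono_set hsub)
      have := hX_eq t ⟨le_trans ht1.1.le ht.1, ht.2⟩
      rw [intervalIntegral.integral_undef hni] at this
      simpa using this
    have hlim : Tendsto X (𝓝[<] Tξ) (𝓝 (ξ + g Tξ)) := by
      apply Tendsto.congr' _ (tendsto_const_nhds.add hg_lim)
      filter_upwards [hIco_mem t1 ht1.2] with t ht
      exact (hXg t ht).symm
    exact absurd hX_blow (not_tendsto_atTop_of_tendsto_nhds hlim)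
  -- main case
  -- bound g on [0,Tξ]
  obtain ⟨G0, hG0⟩ := (isCompact_Icc : IsCompact (Icc (0:ℝ) Tξ)).exists_bound_of_continuousOn
    (hg_cont.mono (fun x hx => hx.1))
  set G : ℝ := max G0 0 with hG_def
  have hG_nonneg : 0 ≤ G := le_max_right _ _
  have hG : ∀ t ∈ Icc (0:ℝ) Tξ, |g t| ≤ G := fun t ht => (hG0 t ht).trans (le_max_left _ _)
  -- pick t0
  obtain ⟨t0, hXt0, ht0⟩ :
      ∃ t0, X t0 ≥ r + 2*G + 1 ∧ t0 ∈ Ioo (0:ℝ) Tξ :=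
    ((hX_blow.eventually_ge_atTop (r + 2*G + 1)).and
      (eventually_of_mem hIoo_mem (fun x hx => hx))).exists
  set u : ℝ → ℝ := fun t => ξ + (∫ s in (0:ℝ)..t, f s) + G with hu_def
  have hu_eq : ∀ t ∈ Ico (0:ℝ) Tξ, u t = X t - g t + G := by
    intro t ht
    have := hX_eq t ht
    simp only [hu_def]
    rw [this]; ring
  have hu_deriv : ∀ t ∈ Ioo (0:ℝ) Tξ, HasDerivAt u (f t) t := by
    intro t ht
    have h1 := intervalIntegral.integral_hasDerivAt_right (hcase t ht)
      (hf_cont.stronglyMeasurableAtFilter isOpen_Ioo t ht)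
      (hf_cont.continuousAt (isOpen_Ioo.mem_nhds ht))
    exact (h1.const_add ξ).add_const G
  have hf_nonneg_pos : ∀ s : ℝ, 0 < s → 0 ≤ f s := fun s hs =>
    mul_nonneg (ha_pos s hs).le (hb_nonneg _)
  have hu_mono : ∀ s t : ℝ, 0 < s → s ≤ t → t < Tξ → u s ≤ u t := by
    intro s t hs hst ht
    have hi1 : IntervalIntegrable f volume 0 s := hcase s ⟨hs, lt_of_le_of_lt hst ht⟩
    have hist : IntervalIntegrable f volume s t := by
      apply ContinuousOn.intervalIntegrable
      apply hf_cont.mono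
      rw [uIcc_of_le hst]
      exact fun x hx => ⟨lt_of_lt_of_le hs hx.1, lt_of_le_of_lt hx.2 ht⟩
    have hsplit : (∫ x in (0:ℝ)..s, f x) + (∫ x in s..t, f x) = ∫ x in (0:ℝ)..t, f x :=
      intervalIntegral.integral_add_adjacent_intervals hi1 hist
    have hpos : 0 ≤ ∫ x in s..t, f x := by
      apply intervalIntegral.integral_nonneg hst
      exact fun x hx => hf_nonneg_pos x (lt_of_lt_of_le hs hx.1)
    simp only [hu_def]
    linarith
  set c1 : ℝ := u t0 with hc1_def
  have ht0Ico : t0 ∈ Ico (0:ℝ) Tξ := ⟨ht0.1.le, ht0.2⟩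
  have hc1_ge : r + 2*G + 1 ≤ c1 := by
    have h1 := hu_eq t0 ht0Ico
    have h2 := hG t0 ⟨ht0.1.le, ht0.2.le⟩
    have := abs_le.1 h2
    rw [hc1_def, h1]
    linarith
  have hc1_ge_r : r ≤ c1 := by linarith
  -- facts about u and X on [t0, Tξ)
  have hXu : ∀ s ∈ Ico t0 Tξ, X s ≤ u s ∧ r ≤ X s ∧ r ≤ u s ∧ c1 ≤ u s := by
    intro s hs
    have hsIco : s ∈ Ico (0:ℝ) Tξ := ⟨le_trans ht0.1.le hs.1, hs.2⟩
    have hgs := abs_le.1 (hG s ⟨hsIco.1, hsIco.2.le⟩)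
    have hueq := hu_eq s hsIco
    have huc1 : c1 ≤ u s := hu_mono t0 s ht0.1 hs.1 hs.2
    refine ⟨by rw [hueq]; linarith, ?_, by linarith, huc1⟩
    -- X s = u s + g s - G ≥ c1 - 2G ≥ r
    have : X s = u s + g s - G := by rw [hueq]; ring
    rw [this]; linarith
  -- bound a on [t0, Tξ]
  obtain ⟨A0, hA0⟩ := (isCompact_Icc : IsCompact (Icc t0 Tξ)).exists_bound_of_continuousOn
    (ha_cont.mono (fun x hx => lt_of_lt_of_le ht0.1 hx.1))
  set A : ℝ := max A0 0 with hA_def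
  have hA_nonneg : 0 ≤ A := le_max_right _ _
  have hA : ∀ x ∈ Icc t0 Tξ, |a x| ≤ A := fun x hx => (hA0 x hx).trans (le_max_left _ _)
  -- key estimate
  have key : ∀ t ∈ Ico t0 Tξ, (∫ x in c1..(u t), (b x)⁻¹) ≤ A * Tξ := by
    intro t ht
    have hsub : Icc t0 t ⊆ Ioo 0 Tξ := fun s hs =>
      ⟨lt_of_lt_of_le ht0.1 hs.1, lt_of_le_of_lt hs.2 ht.2⟩
    have hsub' : Icc t0 t ⊆ Ico t0 Tξ := fun s hs => ⟨hs.1, lt_of_le_of_lt hs.2 ht.2⟩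
    -- u is continuous on Icc t0 t
    have hu_cont : ContinuousOn u (Icc t0 t) := fun s hs =>
      ((hu_deriv s (hsub hs)).continuousAt).continuousWithinAt
    -- derivative of Φ ∘ u
    have hbinv_meas : StronglyMeasurableAtFilter (fun x => (b x)⁻¹) (𝓝 (u t)) volume := by
      exact (hb_cont.measurable.inv.stronglyMeasurable).stronglyMeasurableAtFilter
    have hF : ∀ s ∈ uIcc t0 t, HasDerivAt (fun x => ∫ y in c1..(u x), (b y)⁻¹)
        ((b (u s))⁻¹ * f s) s := by
      rw [uIcc_of_le ht.1]
      intro s hs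
      have hus := hXu s (hsub' hs)
      have hbus : 0 < b (u s) := hbr_pos _ hus.2.2.1
      have hii : IntervalIntegrable (fun y => (b y)⁻¹) volume c1 (u s) := by
        apply ContinuousOn.intervalIntegrable
        apply ContinuousOn.inv₀ hb_cont.continuousOn
        intro x hx
        rw [uIcc_of_le hus.2.2.2] at hx
        exact (hbr_pos x (le_trans hc1_ge_r hx.1)).ne'
      have hΦ : HasDerivAt (fun y => ∫ x in c1..y, (b x)⁻¹) ((b (u s))⁻¹) (u s) :=
        intervalIntegral.integral_hasDerivAt_right hii
          ((hb_cont.measurable.inv.stronglyMeasurable).stronglyMeasurableAtFilter)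
          ((hb_cont.continuousAt).inv₀ hbus.ne')
      exact hΦ.comp s (hu_deriv s (hsub hs))
    -- integrability of the derivative
    have hderiv_cont : ContinuousOn (fun s => (b (u s))⁻¹ * f s) (Icc t0 t) := by
      apply ContinuousOn.mul
      · apply ContinuousOn.inv₀ (hb_cont.comp_continuousOn hu_cont)
        intro s hs
        exact (hbr_pos _ ((hXu s (hsub' hs)).2.2.1)).ne'
      · exact hf_cont.mono hsub
    have hFi : IntervalIntegrable (fun s => (b (u s))⁻¹ * f s) volume t0 t := by
      apply ContinuousOn.intervalIntegrable
      rwa [uIcc_of_le ht.1]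
    have heq : (∫ s in t0..t, (b (u s))⁻¹ * f s)
        = (∫ y in c1..(u t), (b y)⁻¹) - (∫ y in c1..(u t0), (b y)⁻¹) :=
      intervalIntegral.integral_eq_sub_of_hasDerivAt hF hFi
    have hΦt0 : (∫ y in c1..(u t0), (b y)⁻¹) = 0 := by
      rw [← hc1_def]; exact intervalIntegral.integral_same
    have hai : IntervalIntegrable a volume t0 t := by
      apply ContinuousOn.intervalIntegrable
      apply ha_cont.mono
      rw [uIcc_of_le ht.1]
      exact fun x hx => lt_of_lt_of_le ht0.1 hx.1
    have hle : (∫ s in t0..t, (b (u s))⁻¹ * f s) ≤ ∫ s in t0..t, a s := by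
      apply intervalIntegral.integral_mono_on ht.1 hFi hai
      intro s hs
      have hus := hXu s (hsub' hs)
      have hbus : 0 < b (u s) := hbr_pos _ hus.2.2.1
      have hble : b (X s) ≤ b (u s) := hb_mono hus.2.1 hus.2.2.1 hus.1
      have has : 0 ≤ a s := (ha_pos s (lt_of_lt_of_le ht0.1 hs.1)).le
      have h1 : (b (u s))⁻¹ * f s = a s * (b (X s) / b (u s)) := by
        simp only [hf_def]; field_simp
      rw [h1]
      calc a s * (b (X s) / b (u s)) ≤ a s * 1 := by
            exact mul_le_mul_of_nonneg_left ((div_le_one hbus).2 hble) has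
        _ = a s := mul_one _
    have haint : (∫ s in t0..t, a s) ≤ A * Tξ := by
      have h1 : ‖∫ s in t0..t, a s‖ ≤ A * |t - t0| := by
        apply intervalIntegral.norm_integral_le_of_norm_le_const
        intro x hx
        rw [uIoc_of_le ht.1] at hx
        exact hA x ⟨hx.1.le, hx.2.trans ht.2.le⟩
      have h2 : |t - t0| ≤ Tξ := by
        rw [abs_of_nonneg (by linarith [ht.1])]
        linarith [ht0.1, ht.2]
      calc (∫ s in t0..t, a s) ≤ ‖∫ s in t0..t, a s‖ := le_abs_self _
        _ ≤ A * |t - t0| := h1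
        _ ≤ A * Tξ := mul_le_mul_of_nonneg_left h2 hA_nonneg
    linarith [heq, hΦt0, hle, haint]
  -- integrability on (c1, ∞)
  have hInt2 : IntegrableOn (fun x => (b x)⁻¹) (Ioi c1) := by
    apply integrableOn_Ioi_of_intervalIntegral_norm_bounded (A * Tξ) c1
      (b := u) (l := 𝓝[<] Tξ)
    · intro i
      rcases le_or_gt (u i) c1 with h | h
      · rw [Ioc_eq_empty (not_lt.2 h)]
        exact integrableOn_empty
      · have hcont : ContinuousOn (fun x => (b x)⁻¹) (Icc c1 (u i)) := by
          apply ContinuousOn.inv₀ hb_cont.continuousOn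
          exact fun x hx => (hbr_pos x (le_trans hc1_ge_r hx.1)).ne'
        exact (hcont.integrableOn_Icc).mono_set Ioc_subset_Icc_self
    · apply tendsto_atTop_mono' _ _ hX_blow
      filter_upwards [hIco_mem 0 hTξ] with i hi
      have hgs := abs_le.1 (hG i ⟨hi.1, hi.2.le⟩)
      rw [hu_eq i hi]
      linarith
    · filter_upwards [hIco_mem t0 ht0.2] with i hi
      have husc1 : c1 ≤ u i := (hXu i hi).2.2.2
      have : (∫ x in c1..(u i), ‖(b x)⁻¹‖) = ∫ x in c1..(u i), (b x)⁻¹ := by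
        apply intervalIntegral.integral_congr
        intro x hx
        rw [uIcc_of_le husc1] at hx
        have : 0 < b x := hbr_pos x (le_trans hc1_ge_r hx.1)
        show ‖(b x)⁻¹‖ = (b x)⁻¹
        rw [Real.norm_eq_abs, abs_of_nonneg (by positivity)]
      rw [this]
      exact key i hi
  -- integrability on (r, c1]
  have hInt1 : IntegrableOn (fun x => (b x)⁻¹) (Ioc r c1) := by
    have hcont : ContinuousOn (fun x => (b x)⁻¹) (Icc r c1) := by
      apply ContinuousOn.inv₀ hb_cont.continuousOn
      exact fun x hx => (hbr_pos x hx.1).ne'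
    exact (hcont.integrableOn_Icc).mono_set Ioc_subset_Icc_self
  have := hInt1.union hInt2
  rwa [Ioc_union_Ioi_eq_Ioi hc1_ge_r] at this
end

section
/- (Bounded noise, no explosion) Let a:(0,∞)→(0,∞) be continuous, b:ℝ→[0,∞) continuous, positive and locally Lipschitz on (l,∞), non-decreasing on [r,∞), and g:[0,∞)→ℝ continuous and bounded. Assume ξ + inf_{s≥0} g(s) > r. If ∫_r^∞ ds/b(s) = ∞, then the solution of X_t = ξ + ∫_0^t a(s)b(X_s)ds + g(t) is defined for all t ≥ 0 (does not explode in finite time). -/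
open MeasureTheory Set Filter Topology intervalIntegral

/-- Picard-type monotone iteration for the integral equation. -/
noncomputable def stmt7Iter (ξ : ℝ) (gt at' b : ℝ → ℝ) : ℕ → ℝ → ℝ
  | 0 => fun t => ξ + gt t
  | n+1 => fun t => ξ + gt t + ∫ s in (0:ℝ)..t, at' s * b (stmt7Iter ξ gt at' b n s)

/-- Bounded noise, no explosion: under H1, H2, with `g` continuous and bounded and
`ξ + inf_{s ≥ 0} g(s) > r`, if `∫_r^∞ ds/b(s) = ∞` then the solution of
`X_t = ξ + ∫_0^t a(s) b(X_s) ds + g(t)` is defined for all `t ≥ 0`. -/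
theorem stmt7
    (a : ℝ → ℝ) (b : ℝ → ℝ) (g : ℝ → ℝ) (l : EReal) (r ξ m : ℝ)
    -- H1
    (ha_cont : ContinuousOn a (Ioi 0)) (ha_pos : ∀ t ∈ Ioi (0:ℝ), 0 < a t)
    (ha_int : ∃ η > (0:ℝ), ∃ c > (0:ℝ), ∀ᶠ t in atTop, c ≤ ∫ s in t..(t + η), a s)
    -- H2
    (hb_cont : Continuous b) (hb_nonneg : ∀ x, 0 ≤ b x)
    (hb_pos : ∀ x : ℝ, l < (x : EReal) → 0 < b x)
    (hb_lip : LocallyLipschitzOn {x : ℝ | l < (x : EReal)} b)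
    (hb_mono : MonotoneOn b (Ici r))
    (hbr_pos : ∀ x ∈ Ici r, 0 < b x)
    (hl : l < (⊤ : EReal))
    -- g continuous and bounded, with ξ + inf g > r
    (hg_cont : ContinuousOn g (Ici 0))
    (hg_bdd : ∃ C : ℝ, ∀ s ∈ Ici (0:ℝ), |g s| ≤ C)
    (hm : IsGLB (g '' Ici 0) m) (hξ : r < ξ + m)
    -- divergent Osgood integral
    (hOsg : ¬ IntegrableOn (fun s => 1 / b s) (Ioi r)) :
    ∃ X : ℝ → ℝ, ContinuousOn X (Ici 0) ∧
      ∀ t ∈ Ici (0:ℝ), X t = ξ + (∫ s in (0:ℝ)..t, a s * b (X s)) + g t := by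
  obtain ⟨C, hC⟩ := hg_bdd
  -- basic facts about g on [0,∞)
  have hmg : ∀ t : ℝ, 0 ≤ t → m ≤ g t := fun t ht => hm.1 ⟨t, ht, rfl⟩
  have hgC : ∀ t : ℝ, 0 ≤ t → g t ≤ C := fun t ht => (abs_le.1 (hC t ht)).2
  have hmC : m ≤ C := (hmg 0 le_rfl).trans (hgC 0 le_rfl)
  set p : ℝ := ξ + m with hp_def
  set q : ℝ := ξ + C with hq_def
  have hrp : r < p := hξ
  have hpq : p ≤ q := by simp [hp_def, hq_def]; linarith
  have hrq : r < q := lt_of_lt_of_le hrp hpq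
  by_cases hQ : ∀ T > (0:ℝ), IntegrableOn a (Ioc 0 T)
  · -- main case : a is locally integrable near 0
    have hQ' : ∀ T : ℝ, IntegrableOn a (Ioc 0 T) := by
      intro T
      rcases le_or_gt T 0 with h | h
      · rw [Ioc_eq_empty (by exact fun hc => absurd (hc.trans_le h) (lt_irrefl 0))]
        exact integrableOn_empty
      · exact hQ T h
    set at' : ℝ → ℝ := (Ioi (0:ℝ)).indicator a with hat'_def
    have hat'_eq : ∀ s : ℝ, 0 < s → at' s = a s := fun s hs => indicator_of_mem hs a
    have hat'_zero : ∀ s : ℝ, s ≤ 0 → at' s = 0 :=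
      fun s hs => indicator_of_notMem (by simpa using hs) a
    have hat'_nonneg : ∀ s, 0 ≤ at' s := by
      intro s
      rcases le_or_gt s 0 with h | h
      · rw [hat'_zero s h]
      · rw [hat'_eq s h]; exact (ha_pos s h).le
    have hat'_ii : ∀ u v : ℝ, IntervalIntegrable at' volume u v := by
      intro u v
      rw [intervalIntegrable_iff]
      have h1 : IntegrableOn a (Ioi 0 ∩ uIoc u v) := by
        apply (hQ' (max u v)).mono_set
        intro s hs
        exact ⟨hs.1, hs.2.2⟩
      rw [hat'_def, IntegrableOn, integrable_indicator_iff measurableSet_Ioi, IntegrableOn,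
        Measure.restrict_restrict measurableSet_Ioi]
      exact h1
    have hprod : ∀ h : ℝ → ℝ, Continuous h → ∀ u v : ℝ,
        IntervalIntegrable (fun s => at' s * b (h s)) volume u v :=
      fun h hh u v => (hat'_ii u v).mul_continuousOn ((hb_cont.comp hh).continuousOn)
    have hzero : ∀ (f : ℝ → ℝ) (t : ℝ), t ≤ 0 → (∀ s ≤ (0:ℝ), f s = 0) →
        ∫ s in (0:ℝ)..t, f s = 0 := by
      intro f t ht hf
      rw [intervalIntegral.integral_symm]
      rw [intervalIntegral.integral_congr (g := fun _ => (0:ℝ)) ?_]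
      · simp
      · intro s hs
        apply hf
        have h2 := hs.2
        rw [sup_eq_right.2 ht] at h2
        exact h2
    have hI_nonneg : ∀ (f : ℝ → ℝ) (t : ℝ), (∀ s, 0 ≤ f s) → (∀ s ≤ (0:ℝ), f s = 0) →
        0 ≤ ∫ s in (0:ℝ)..t, f s := by
      intro f t hf h0
      rcases le_total t 0 with h | h
      · rw [hzero f t h h0]
      · exact intervalIntegral.integral_nonneg h (fun s _ => hf s)
    -- the modified g
    set gt : ℝ → ℝ := fun t => g (max t 0) with hgt_def
    have hgt_cont : Continuous gt :=
      hg_cont.comp_continuous (continuous_id.max continuous_const)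
        (fun x => mem_Ici.2 (le_max_right _ _))
    have hgt_m : ∀ t, m ≤ gt t := fun t => hmg _ (le_max_right _ _)
    have hgt_C : ∀ t, gt t ≤ C := fun t => hgC _ (le_max_right _ _)
    have hgt_eq : ∀ t : ℝ, 0 ≤ t → gt t = g t := fun t ht => by
      rw [hgt_def]; simp [max_eq_left ht]
    -- the Osgood function B and its inverse φ
    set f0 : ℝ → ℝ := fun s => (b (max s q))⁻¹ with hf0_def
    have hbq_pos : ∀ s : ℝ, 0 < b (max s q) :=
      fun s => hbr_pos _ (mem_Ici.2 (hrq.le.trans (le_max_right s q)))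
    have hf0_cont : Continuous f0 :=
      (hb_cont.comp (continuous_id.max continuous_const)).inv₀ (fun s => (hbq_pos s).ne')
    have hf0_pos : ∀ s, 0 < f0 s := fun s => inv_pos.2 (hbq_pos s)
    set B : ℝ → ℝ := fun x => ∫ s in q..x, f0 s with hB_def
    have hB_deriv : ∀ x, HasDerivAt B (f0 x) x := fun x =>
      intervalIntegral.integral_hasDerivAt_right (hf0_cont.intervalIntegrable _ _)
        (hf0_cont.stronglyMeasurableAtFilter _ _) hf0_cont.continuousAt
    have hB_cont : Continuous B :=
      continuous_iff_continuousAt.2 fun x => (hB_deriv x).continuousAt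
    have hB_mono : StrictMono B :=
      strictMono_of_deriv_pos (fun x => by rw [(hB_deriv x).deriv]; exact hf0_pos x)
    have hB_q : B q = 0 := intervalIntegral.integral_same
    have hB_top : ∀ y : ℝ, ∃ x, y ≤ B x := by
      intro y
      by_contra hcon
      push_neg at hcon
      have hfi : ∀ i : ℝ, IntegrableOn f0 (Ioc q i) := fun i => hf0_cont.integrableOn_Ioc
      have hIoi : IntegrableOn f0 (Ioi q) := by
        apply integrableOn_Ioi_of_intervalIntegral_norm_bounded y q hfi
          (tendsto_id (α := ℝ))
        apply Eventually.of_forall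
        intro i
        have : ∫ x in q..i, ‖f0 x‖ = B i := by
          apply intervalIntegral.integral_congr
          intro s _
          exact Real.norm_of_nonneg (hf0_pos s).le
        rw [this]
        exact (hcon i).le
      apply hOsg
      have h1 : IntegrableOn (fun s => 1 / b s) (Ioi q) := by
        apply (integrableOn_congr_fun ?_ measurableSet_Ioi).1 hIoi
        intro s hs
        show (b (max s q))⁻¹ = 1 / b s
        rw [max_eq_left (le_of_lt hs), one_div]
      have h2 : IntegrableOn (fun s => 1 / b s) (Ioc r q) := by
        have hcont2 : ContinuousOn (fun s => 1 / b s) (Icc r q) :=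
          continuousOn_const.div hb_cont.continuousOn (fun s hs => (hbr_pos _ hs.1).ne')
        exact hcont2.integrableOn_Icc.mono_set Ioc_subset_Icc_self
      have := h2.union h1
      rwa [Ioc_union_Ioi_eq_Ioi hrq.le] at this
    have hbq : 0 < b q := hbr_pos _ (mem_Ici.2 hrq.le)
    have hB_surj : Function.Surjective B := by
      intro y
      obtain ⟨x2, hx2⟩ := hB_top y
      set M : ℝ := max 0 (-y * b q) with hM_def
      have hM0 : 0 ≤ M := le_max_left _ _
      have hBlow : B (q - M) ≤ y := by
        have hcongr : ∫ s in (q - M)..q, f0 s = ∫ s in (q - M)..q, (b q)⁻¹ := by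
          apply intervalIntegral.integral_congr
          intro s hs
          rw [uIcc_of_le (by linarith)] at hs
          rw [hf0_def]
          simp only [max_eq_right hs.2]
        have hval : B (q - M) = -(M * (b q)⁻¹) := by
          show (∫ s in q..(q - M), f0 s) = -(M * (b q)⁻¹)
          rw [intervalIntegral.integral_symm, hcongr, intervalIntegral.integral_const]
          rw [smul_eq_mul]
          ring_nf
        rw [hval]
        have hyM : -y * b q ≤ M := le_max_right _ _
        have := mul_le_mul_of_nonneg_right hyM (inv_pos.2 hbq).le
        rw [mul_assoc, mul_inv_cancel₀ hbq.ne', mul_one] at this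
        linarith
      set x2' : ℝ := max x2 (q - M) with hx2'_def
      have hx2'ge : y ≤ B x2' := hx2.trans (hB_mono.monotone (le_max_left _ _))
      have hIVT := intermediate_value_Icc (le_max_right x2 (q - M)) hB_cont.continuousOn
      obtain ⟨x, _, hx⟩ := hIVT ⟨hBlow, hx2'ge⟩
      exact ⟨x, hx⟩
    set e : ℝ ≃o ℝ := StrictMono.orderIsoOfSurjective B hB_mono hB_surj with he_def
    have hecoe : ∀ x, e x = B x := fun x =>
      congrFun (StrictMono.coe_orderIsoOfSurjective B hB_mono hB_surj) x
    set φ : ℝ → ℝ := fun y => e.symm y with hφ_def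
    have hφB : ∀ y, B (φ y) = y := fun y => by
      rw [hφ_def, ← hecoe (e.symm y)]; exact e.apply_symm_apply y
    have hBφ : ∀ x, φ (B x) = x := fun x => by
      rw [hφ_def, ← hecoe x]; exact e.symm_apply_apply x
    have hφmono : Monotone φ := fun u v huv => e.symm.monotone huv
    have hφcont : Continuous φ := e.symm.continuous
    have hφ0 : φ 0 = q := by rw [← hB_q, hBφ]
    have hφ_ge : ∀ y : ℝ, 0 ≤ y → q ≤ φ y := by
      intro y hy
      have := hφmono (hB_q.symm ▸ hy : B q ≤ y)
      rwa [hBφ] at this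
    have hφ_deriv : ∀ y, HasDerivAt φ (b (max (φ y) q)) y := by
      intro y
      have h := HasDerivAt.of_local_left_inverse hφcont.continuousAt (hB_deriv (φ y))
        (hf0_pos (φ y)).ne' (Eventually.of_forall hφB)
      rw [hf0_def] at h
      simpa [inv_inv] using h
    -- the primitive A of at'
    set A : ℝ → ℝ := fun t => ∫ s in (0:ℝ)..t, at' s with hA_def
    have hA_cont : Continuous A := intervalIntegral.continuous_primitive hat'_ii 0
    have hA_nonneg : ∀ t, 0 ≤ A t := fun t => hI_nonneg at' t hat'_nonneg hat'_zero
    have hA0 : A 0 = 0 := intervalIntegral.integral_same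
    have hA_deriv : ∀ t : ℝ, 0 < t → HasDerivAt A (at' t) t := by
      intro t ht
      have hcont : ContinuousOn at' (Ioi 0) := ha_cont.congr (fun s hs => hat'_eq s hs)
      exact intervalIntegral.integral_hasDerivAt_right (hat'_ii 0 t)
        (hcont.stronglyMeasurableAtFilter isOpen_Ioi t ht)
        ((hcont.continuousAt (Ioi_mem_nhds ht)))
    -- the dominating solution W
    set W : ℝ → ℝ := fun t => φ (A t) with hW_def
    have hW_cont : Continuous W := hφcont.comp hA_cont
    have hW_ge : ∀ t, q ≤ W t := fun t => hφ_ge _ (hA_nonneg t)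
    have hW0 : W 0 = q := by rw [hW_def]; simp only [hA0]; exact hφ0
    have hW_r : ∀ t, r ≤ W t := fun t => hrq.le.trans (hW_ge t)
    have hW_deriv : ∀ t : ℝ, 0 < t → HasDerivAt W (at' t * b (W t)) t := by
      intro t ht
      have h1 := (hφ_deriv (A t)).comp t (hA_deriv t ht)
      have h2 : max (φ (A t)) q = φ (A t) := max_eq_left (hφ_ge _ (hA_nonneg t))
      rw [h2] at h1
      rw [mul_comm] at h1; exact h1
    have hW_eq : ∀ t : ℝ, 0 ≤ t → W t = q + ∫ s in (0:ℝ)..t, at' s * b (W s) := by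
      intro t ht
      have := intervalIntegral.integral_eq_sub_of_hasDerivAt_of_le ht hW_cont.continuousOn
        (fun x hx => hW_deriv x hx.1) (hprod W hW_cont 0 t)
      rw [this, hW0]
      ring
    -- the Picard iteration
    set X : ℕ → ℝ → ℝ := stmt7Iter ξ gt at' b with hX_def
    have hX0 : ∀ t, X 0 t = ξ + gt t := fun t => rfl
    have hXsucc : ∀ n t, X (n+1) t = ξ + gt t + ∫ s in (0:ℝ)..t, at' s * b (X n s) :=
      fun n t => rfl
    have hIzero : ∀ (h : ℝ → ℝ) (t : ℝ), t ≤ 0 → ∫ s in (0:ℝ)..t, at' s * b (h s) = 0 :=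
      fun h t ht => hzero _ t ht (fun s hs => by rw [hat'_zero s hs, zero_mul])
    have hInn : ∀ (h : ℝ → ℝ) (t : ℝ), 0 ≤ ∫ s in (0:ℝ)..t, at' s * b (h s) :=
      fun h t => hI_nonneg _ t (fun s => mul_nonneg (hat'_nonneg s) (hb_nonneg _))
        (fun s hs => by rw [hat'_zero s hs, zero_mul])
    have key : ∀ n, Continuous (X n) ∧ ∀ t, p ≤ X n t ∧ X n t ≤ X (n+1) t ∧ X n t ≤ W t := by
      intro n
      induction n with
      | zero =>
        refine ⟨continuous_const.add hgt_cont, fun t => ⟨?_, ?_, ?_⟩⟩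
        · rw [hX0, hp_def]; exact add_le_add_right (hgt_m t) ξ
        · rw [hX0, hXsucc]
          have := hInn (X 0) t
          linarith
        · rw [hX0]
          calc ξ + gt t ≤ q := by rw [hq_def]; exact add_le_add_right (hgt_C t) ξ
            _ ≤ W t := hW_ge t
      | succ n ih =>
        obtain ⟨ihc, ihb⟩ := ih
        have hcont : Continuous (X (n+1)) := by
          have : X (n+1) = fun t => ξ + gt t + ∫ s in (0:ℝ)..t, at' s * b (X n s) :=
            funext (fun t => hXsucc n t)
          rw [this]
          exact (continuous_const.add hgt_cont).add
            (intervalIntegral.continuous_primitive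
              (fun u v => (hat'_ii u v).mul_continuousOn ((hb_cont.comp ihc).continuousOn)) 0)
        have hXnr : ∀ s, r ≤ X n s := fun s => hrp.le.trans (ihb s).1
        have hXn1r : ∀ s, r ≤ X (n+1) s := fun s => (hXnr s).trans (ihb s).2.1
        refine ⟨hcont, fun t => ⟨?_, ?_, ?_⟩⟩
        · rw [hXsucc, hp_def]
          have h1 := hgt_m t
          have h2 := hInn (X n) t
          linarith
        · rw [hXsucc, hXsucc]
          have hmono_int : (∫ s in (0:ℝ)..t, at' s * b (X n s)) ≤
              ∫ s in (0:ℝ)..t, at' s * b (X (n+1) s) := by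
            rcases le_total t 0 with h | h
            · rw [hIzero (X n) t h, hIzero (X (n+1)) t h]
            · apply intervalIntegral.integral_mono_on h (hprod (X n) ihc 0 t)
                (hprod (X (n+1)) hcont 0 t)
              intro s _
              exact mul_le_mul_of_nonneg_left
                (hb_mono (mem_Ici.2 (hXnr s)) (mem_Ici.2 (hXn1r s)) (ihb s).2.1)
                (hat'_nonneg s)
          linarith
        · rcases le_total t 0 with h | h
          · rw [hXsucc, hIzero (X n) t h]
            have h1 := hgt_C t
            have h2 := hW_ge t
            rw [hq_def] at h2
            linarith
          · rw [hXsucc, hW_eq t h]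
            have hmono_int : (∫ s in (0:ℝ)..t, at' s * b (X n s)) ≤
                ∫ s in (0:ℝ)..t, at' s * b (W s) := by
              apply intervalIntegral.integral_mono_on h (hprod (X n) ihc 0 t)
                (hprod W hW_cont 0 t)
              intro s _
              exact mul_le_mul_of_nonneg_left
                (hb_mono (mem_Ici.2 (hXnr s)) (mem_Ici.2 (hW_r s)) (ihb s).2.2)
                (hat'_nonneg s)
            have h1 := hgt_C t
            rw [hq_def]
            linarith
    have hXcont : ∀ n, Continuous (X n) := fun n => (key n).1
    have hXp : ∀ n t, p ≤ X n t := fun n t => ((key n).2 t).1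
    have hXW : ∀ n t, X n t ≤ W t := fun n t => ((key n).2 t).2.2
    have hXr : ∀ n s, r ≤ X n s := fun n s => hrp.le.trans (hXp n s)
    have hXmono : ∀ t : ℝ, Monotone (fun n => X n t) :=
      fun t => monotone_nat_of_le_succ (fun n => ((key n).2 t).2.1)
    have hbdd : ∀ t : ℝ, BddAbove (range fun n => X n t) := by
      intro t
      refine ⟨W t, ?_⟩
      rintro y ⟨n, rfl⟩
      exact hXW n t
    set Y : ℝ → ℝ := fun t => ⨆ n, X n t with hY_def
    have hYlim : ∀ t, Tendsto (fun n => X n t) atTop (𝓝 (Y t)) :=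
      fun t => tendsto_atTop_ciSup (hXmono t) (hbdd t)
    have hYp : ∀ t, p ≤ Y t := fun t => (hXp 0 t).trans (le_ciSup (hbdd t) 0)
    have hYW : ∀ t, Y t ≤ W t := fun t => ciSup_le (fun n => hXW n t)
    have hYr : ∀ t, r ≤ Y t := fun t => hrp.le.trans (hYp t)
    -- the limit satisfies the equation
    have hYeq : ∀ t : ℝ, 0 ≤ t → Y t = ξ + gt t + ∫ s in (0:ℝ)..t, at' s * b (Y s) := by
      intro t ht
      have h1 : Tendsto (fun n => X (n+1) t) atTop (𝓝 (Y t)) :=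
        (hYlim t).comp (tendsto_add_atTop_nat 1)
      have h2 : Tendsto (fun n => ∫ s in (0:ℝ)..t, at' s * b (X n s)) atTop
          (𝓝 (∫ s in (0:ℝ)..t, at' s * b (Y s))) := by
        apply intervalIntegral.tendsto_integral_filter_of_dominated_convergence
          (fun s => at' s * b (W s))
        · exact Eventually.of_forall (fun n =>
            (hat'_ii 0 t).def'.aestronglyMeasurable.mul
              ((hb_cont.comp (hXcont n)).aestronglyMeasurable))
        · apply Eventually.of_forall
          intro n
          apply ae_of_all
          intro s _
          rw [Real.norm_eq_abs, abs_of_nonneg (mul_nonneg (hat'_nonneg s) (hb_nonneg _))]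
          exact mul_le_mul_of_nonneg_left
            (hb_mono (mem_Ici.2 (hXr n s)) (mem_Ici.2 (hW_r s)) (hXW n s)) (hat'_nonneg s)
        · exact hprod W hW_cont 0 t
        · apply ae_of_all
          intro s _
          exact tendsto_const_nhds.mul ((hb_cont.tendsto _).comp (hYlim s))
      have h3 : Tendsto (fun n => X (n+1) t) atTop
          (𝓝 (ξ + gt t + ∫ s in (0:ℝ)..t, at' s * b (Y s))) := by
        simp only [hXsucc]
        exact tendsto_const_nhds.add h2
      exact tendsto_nhds_unique h1 h3
    -- continuity of the limit
    set G : ℝ → ℝ := fun t => ∫ s in (0:ℝ)..t, at' s * b (W s) with hG_def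
    have hG_cont : Continuous G :=
      intervalIntegral.continuous_primitive
        (fun u v => (hat'_ii u v).mul_continuousOn ((hb_cont.comp hW_cont).continuousOn)) 0
    have hsplit : ∀ (h : ℝ → ℝ), Continuous h → ∀ u v : ℝ,
        (∫ s in (0:ℝ)..v, at' s * b (h s)) =
          (∫ s in (0:ℝ)..u, at' s * b (h s)) + ∫ s in u..v, at' s * b (h s) :=
      fun h hc u v =>
        (intervalIntegral.integral_add_adjacent_intervals (hprod h hc 0 u) (hprod h hc u v)).symm
    have hG_mono : Monotone G := by
      intro u v huv
      have h1 := hsplit W hW_cont u v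
      have h2 : 0 ≤ ∫ s in u..v, at' s * b (W s) :=
        intervalIntegral.integral_nonneg huv
          (fun s _ => mul_nonneg (hat'_nonneg s) (hb_nonneg _))
      rw [hG_def]
      simp only []
      linarith
    have hstep : ∀ (n : ℕ) (u v : ℝ), u ≤ v →
        |X n v - X n u| ≤ |gt v - gt u| + (G v - G u) := by
      intro n u v huv
      cases n with
      | zero =>
        rw [hX0, hX0, show ξ + gt v - (ξ + gt u) = gt v - gt u from by ring]
        have := hG_mono huv
        linarith
      | succ n =>
        have hGuv : G v - G u = ∫ s in u..v, at' s * b (W s) := by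
          have := hsplit W hW_cont u v
          rw [hG_def]
          simp only []
          linarith
        have h0 : 0 ≤ ∫ s in u..v, at' s * b (X n s) :=
          intervalIntegral.integral_nonneg huv
            (fun s _ => mul_nonneg (hat'_nonneg s) (hb_nonneg _))
        have h1 : (∫ s in u..v, at' s * b (X n s)) ≤ ∫ s in u..v, at' s * b (W s) := by
          apply intervalIntegral.integral_mono_on huv (hprod (X n) (hXcont n) u v)
            (hprod W hW_cont u v)
          intro s _
          exact mul_le_mul_of_nonneg_left
            (hb_mono (mem_Ici.2 (hXr n s)) (mem_Ici.2 (hW_r s)) (hXW n s)) (hat'_nonneg s)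
        rw [hXsucc, hXsucc,
          show (ξ + gt v + ∫ s in (0:ℝ)..v, at' s * b (X n s)) -
              (ξ + gt u + ∫ s in (0:ℝ)..u, at' s * b (X n s)) =
            (gt v - gt u) + ∫ s in u..v, at' s * b (X n s) from by
              rw [hsplit (X n) (hXcont n) u v]; ring]
        calc |(gt v - gt u) + ∫ s in u..v, at' s * b (X n s)|
            ≤ |gt v - gt u| + |∫ s in u..v, at' s * b (X n s)| := abs_add_le _ _
          _ ≤ |gt v - gt u| + (G v - G u) := by
              rw [abs_of_nonneg h0, hGuv]
              linarith
    have hYstep : ∀ u v : ℝ, u ≤ v → |Y v - Y u| ≤ |gt v - gt u| + (G v - G u) := by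
      intro u v huv
      have hlim : Tendsto (fun n => |X n v - X n u|) atTop (𝓝 |Y v - Y u|) :=
        ((hYlim v).sub (hYlim u)).abs
      exact le_of_tendsto hlim (Eventually.of_forall fun n => hstep n u v huv)
    have hY_cont : Continuous Y := by
      rw [continuous_iff_continuousAt]
      intro t0
      have hb1 : ∀ t : ℝ, dist (Y t) (Y t0) ≤ |gt t - gt t0| + |G t - G t0| := by
        intro t
        rw [Real.dist_eq]
        rcases le_total t t0 with h | h
        · have := hYstep t t0 h
          have h1 : |Y t - Y t0| = |Y t0 - Y t| := abs_sub_comm _ _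
          have h2 : |gt t0 - gt t| = |gt t - gt t0| := abs_sub_comm _ _
          have h3 : G t0 - G t ≤ |G t - G t0| := by
            rw [abs_sub_comm]
            exact le_abs_self _
          linarith
        · have := hYstep t0 t h
          have h3 : G t - G t0 ≤ |G t - G t0| := le_abs_self _
          linarith
      have hb2 : Tendsto (fun t => |gt t - gt t0| + |G t - G t0|) (𝓝 t0) (𝓝 0) := by
        have hc : Continuous (fun t => |gt t - gt t0| + |G t - G t0|) :=
          ((hgt_cont.sub continuous_const).abs).add ((hG_cont.sub continuous_const).abs)
        have := hc.tendsto t0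
        simpa using this
      exact tendsto_iff_dist_tendsto_zero.2 (squeeze_zero (fun t => dist_nonneg) hb1 hb2)
    -- conclusion
    refine ⟨Y, hY_cont.continuousOn, fun t ht => ?_⟩
    have heq := hYeq t ht
    rw [hgt_eq t ht] at heq
    have hint_congr : (∫ s in (0:ℝ)..t, at' s * b (Y s)) = ∫ s in (0:ℝ)..t, a s * b (Y s) := by
      apply intervalIntegral.integral_congr_ae
      apply ae_of_all
      intro s hs
      rw [uIoc_of_le (mem_Ici.1 ht)] at hs
      rw [hat'_eq s hs.1]
    rw [hint_congr] at heq
    linarith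
  · -- degenerate case : the integral is always the junk value 0
    push_neg at hQ
    obtain ⟨T, hT0, hTint⟩ := hQ
    refine ⟨fun t => ξ + g t, (continuousOn_const.add hg_cont), fun t ht => ?_⟩
    have hXgr : ∀ s : ℝ, 0 ≤ s → r < ξ + g s := fun s hs => by
      have := hmg s hs; linarith
    rcases eq_or_lt_of_le (mem_Ici.1 ht) with h0 | h0
    · simp [← h0]
    -- show the integrand is NOT interval integrable
    have hnint : ¬ IntervalIntegrable (fun s => a s * b (ξ + g s)) volume 0 t := by
      rw [intervalIntegrable_iff_integrableOn_Ioc_of_le h0.le]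
      intro hint
      set t' : ℝ := min t T with ht'
      have ht'0 : 0 < t' := lt_min h0 hT0
      have hint' : IntegrableOn (fun s => a s * b (ξ + g s)) (Ioc 0 t') :=
        hint.mono_set (Ioc_subset_Ioc le_rfl (min_le_left _ _))
      -- 1/(b ∘ (ξ+g)) is continuous on [0,t']
      have hcont_bX : ContinuousOn (fun s => (b (ξ + g s))⁻¹) (Icc 0 t') := by
        apply ContinuousOn.inv₀
        · exact hb_cont.comp_continuousOn
            ((continuousOn_const.add (hg_cont.mono (Icc_subset_Ici_self))))
        · intro s hs
          exact ne_of_gt (hbr_pos _ (mem_Ici.2 (hXgr s hs.1).le))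
      have haint' : IntegrableOn a (Ioc 0 t') := by
        have h1 : IntegrableOn (fun s => (b (ξ + g s))⁻¹ * (a s * b (ξ + g s))) (Ioc 0 t') :=
          IntegrableOn.continuousOn_mul_of_subset hcont_bX hint' isCompact_Icc
            measurableSet_Ioc Ioc_subset_Icc_self
        refine (integrableOn_congr_fun (fun s hs => ?_) measurableSet_Ioc).1 h1
        have hb0 : b (ξ + g s) ≠ 0 := ne_of_gt (hbr_pos _ (mem_Ici.2 (hXgr s hs.1.le).le))
        field_simp
      -- extend to Ioc 0 T
      apply hTint
      rcases le_total T t with hTt | htT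
      · exact haint'.mono_set (Ioc_subset_Ioc le_rfl (by simp [ht', hTt]))
      · have ht'eq : t' = t := by simp [ht', htT]
        have h2 : IntegrableOn a (Icc t T) := by
          apply ContinuousOn.integrableOn_Icc
          exact ha_cont.mono (fun s hs => lt_of_lt_of_le h0 hs.1)
        refine (haint'.union h2).mono_set (fun s hs => ?_)
        rcases le_total s t with h | h
        · exact Or.inl (by rw [ht'eq]; exact ⟨hs.1, h⟩)
        · exact Or.inr ⟨h, hs.2⟩
    rw [intervalIntegral.integral_undef hnint]
    ring
end

section
/- For β > 0, a ≠ 0, the function u(t,x) = exp(-e^{-2βx}/(2(aβ)²t)) defined for t > 0, x ∈ ℝ, satisfies the partial differential equation ∂u/∂t = (a²/2)e^{2βx} ∂²u/∂x² + βa²e^{2βx} ∂u/∂x on (0,∞) × ℝ; moreover u(t,x) → 0 as t ↓ 0 for each fixed x, u(t,x) → 1 as x → ∞, and u(t,x) → 0 as x → -∞ for each fixed t > 0. -/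
open MeasureTheory Set Filter Topology Real

-- derivative in x of g y = exp (-(exp (-2*β*y)) / d)
lemma hasDerivAt_g (β d x : ℝ) (hd : d ≠ 0) :
    HasDerivAt (fun y => Real.exp (-(Real.exp (-2 * β * y)) / d))
      (Real.exp (-(Real.exp (-2 * β * x)) / d) * (2 * β * Real.exp (-2 * β * x) / d)) x := by
  have h1 : HasDerivAt (fun y : ℝ => -2 * β * y) (-2 * β) x := by
    simpa using (hasDerivAt_id x).const_mul (-2 * β)
  have h2 : HasDerivAt (fun y => Real.exp (-2 * β * y)) (Real.exp (-2 * β * x) * (-2 * β)) x :=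
    h1.exp
  have h3 : HasDerivAt (fun y => -(Real.exp (-2 * β * y)) / d)
      (-(Real.exp (-2 * β * x) * (-2 * β)) / d) x := by
    simpa [neg_div, Pi.neg_def] using (h2.div_const d).neg
  have := h3.exp
  convert this using 1
  ring

lemma hasDerivAt_f (k c t : ℝ) (ht : t ≠ 0) :
    HasDerivAt (fun s => Real.exp (-k / (c * s)))
      (Real.exp (-k / (c * t)) * (k / c / t ^ 2)) t := by
  have h1 : HasDerivAt (fun s : ℝ => -k / c * s⁻¹) (-k / c * -(t ^ 2)⁻¹) t :=
    (hasDerivAt_inv ht).const_mul (-k / c)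
  have hfun : (fun s : ℝ => -k / (c * s)) = fun s : ℝ => -k / c * s⁻¹ := by
    funext s; rw [div_mul_eq_div_div, div_eq_mul_inv]
  have h2 : HasDerivAt (fun s : ℝ => -k / (c * s)) (k / c / t ^ 2) t := by
    rw [hfun, show k / c / t ^ 2 = -k / c * -(t ^ 2)⁻¹ by ring]
    exact h1
  exact h2.exp

/-- For `β > 0`, `a ≠ 0`, the function `u(t,x) = exp(-e^{-2βx}/(2(aβ)²t))` satisfies
`∂u/∂t = (a²/2) e^{2βx} ∂²u/∂x² + β a² e^{2βx} ∂u/∂x` on `(0,∞) × ℝ`, with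
`u(t,x) → 0` as `t ↓ 0`, `u(t,x) → 1` as `x → ∞`, and `u(t,x) → 0` as `x → -∞`. -/
theorem stmt12 (β a : ℝ) (hβ : 0 < β) (ha : a ≠ 0)
    (u : ℝ → ℝ → ℝ)
    (hu : ∀ t > (0:ℝ), ∀ x : ℝ,
      u t x = Real.exp (-(Real.exp (-2 * β * x)) / (2 * (a * β) ^ 2 * t))) :
    (∀ t > (0:ℝ), ∀ x : ℝ,
      deriv (fun s => u s x) t =
        (a ^ 2 / 2) * Real.exp (2 * β * x) * deriv (deriv (fun y => u t y)) x +
          β * a ^ 2 * Real.exp (2 * β * x) * deriv (fun y => u t y) x) ∧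
    (∀ x : ℝ, Tendsto (fun t => u t x) (𝓝[>] 0) (𝓝 0)) ∧
    (∀ t > (0:ℝ), Tendsto (fun x => u t x) atTop (𝓝 1)) ∧
    (∀ t > (0:ℝ), Tendsto (fun x => u t x) atBot (𝓝 0)) := by
  set c : ℝ := 2 * (a * β) ^ 2 with hc
  have hc0 : 0 < c := by positivity
  refine ⟨?_, ?_, ?_, ?_⟩
  · intro t ht x
    have ht0 : t ≠ 0 := ne_of_gt ht
    have hd0 : c * t ≠ 0 := by positivity
    -- u t · equals g
    have hgu : (fun y => u t y) = fun y => Real.exp (-(Real.exp (-2 * β * y)) / (c * t)) := by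
      funext y; rw [hu t ht y]
    -- time derivative
    have hte : deriv (fun s => u s x) t
        = Real.exp (-(Real.exp (-2 * β * x)) / (c * t)) * (Real.exp (-2 * β * x) / c / t ^ 2) := by
      have hev : (fun s => u s x) =ᶠ[𝓝 t] fun s => Real.exp (-(Real.exp (-2 * β * x)) / (c * s)) := by
        filter_upwards [Ioi_mem_nhds ht] with s hs
        rw [hu s hs x]
      rw [hev.deriv_eq]
      exact (hasDerivAt_f (Real.exp (-2 * β * x)) c t ht0).deriv
    -- first x derivative
    have hx1 : deriv (fun y => u t y)
        = fun y => Real.exp (-(Real.exp (-2 * β * y)) / (c * t)) * (2 * β * Real.exp (-2 * β * y) / (c * t)) := by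
      funext y
      rw [hgu]
      exact (hasDerivAt_g β (c * t) y hd0).deriv
    -- second x derivative
    have hx2 : deriv (deriv (fun y => u t y)) x
        = Real.exp (-(Real.exp (-2 * β * x)) / (c * t)) * (2 * β * Real.exp (-2 * β * x) / (c * t)) * (2 * β * Real.exp (-2 * β * x) / (c * t))
          + Real.exp (-(Real.exp (-2 * β * x)) / (c * t)) * (Real.exp (-2 * β * x) * (-2 * β) * (2 * β) / (c * t)) := by
      rw [hx1]
      have hmul : HasDerivAt
          (fun y => Real.exp (-(Real.exp (-2 * β * y)) / (c * t)) * (2 * β * Real.exp (-2 * β * y) / (c * t)))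
          (Real.exp (-(Real.exp (-2 * β * x)) / (c * t)) * (2 * β * Real.exp (-2 * β * x) / (c * t)) * (2 * β * Real.exp (-2 * β * x) / (c * t))
            + Real.exp (-(Real.exp (-2 * β * x)) / (c * t)) * (Real.exp (-2 * β * x) * (-2 * β) * (2 * β) / (c * t))) x := by
        have hA := hasDerivAt_g β (c * t) x hd0
        have hB : HasDerivAt (fun y => 2 * β * Real.exp (-2 * β * y) / (c * t))
            (Real.exp (-2 * β * x) * (-2 * β) * (2 * β) / (c * t)) x := by
          have h1 : HasDerivAt (fun y : ℝ => -2 * β * y) (-2 * β) x := by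
            simpa using (hasDerivAt_id x).const_mul (-2 * β)
          have h2 := h1.exp
          have := (h2.const_mul (2 * β)).div_const (c * t)
          exact this.congr_deriv (by ring)
        have := hA.mul hB
        exact this.congr_deriv (by ring)
      exact hmul.deriv
    rw [hte, hx2, hx1]
    have hP : Real.exp (2 * β * x) = (Real.exp (-2 * β * x))⁻¹ := by
      rw [show (2:ℝ) * β * x = -(-2 * β * x) by ring, Real.exp_neg]
    have hcβ : c = 2 * a ^ 2 * β ^ 2 := by rw [hc]; ring
    rw [hP, hcβ]
    have hEne : Real.exp (-2 * β * x) ≠ 0 := Real.exp_ne_zero _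
    field_simp
    ring
  · intro x
    have hk : 0 < Real.exp (-2 * β * x) := Real.exp_pos _
    have hev : (fun t => u t x) =ᶠ[𝓝[>] (0:ℝ)] fun t => Real.exp (-(Real.exp (-2 * β * x)) / (c * t)) := by
      filter_upwards [self_mem_nhdsWithin] with t ht
      exact hu t ht x
    rw [Filter.tendsto_congr' hev]
    have h1 : Tendsto (fun t : ℝ => c * t) (𝓝[>] 0) (𝓝[>] 0) := by
      apply tendsto_nhdsWithin_of_tendsto_nhds_of_eventually_within
      · have : Tendsto (fun t : ℝ => c * t) (𝓝 0) (𝓝 (c * 0)) :=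
          (continuous_const.mul continuous_id).tendsto 0
        simpa using this.mono_left nhdsWithin_le_nhds
      · filter_upwards [self_mem_nhdsWithin] with t ht
        exact mul_pos hc0 ht
    have h2 : Tendsto (fun t : ℝ => (c * t)⁻¹) (𝓝[>] 0) atTop :=
      tendsto_inv_nhdsGT_zero.comp h1
    have h3 : Tendsto (fun t : ℝ => -(Real.exp (-2 * β * x)) / (c * t)) (𝓝[>] 0) atBot := by
      have h2' := h2.const_mul_atTop hk
      have h4 := tendsto_neg_atTop_atBot.comp h2'
      simpa [Function.comp_def, div_eq_mul_inv, neg_div, neg_mul] using h4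
    simpa [Function.comp_def] using Real.tendsto_exp_atBot.comp h3
  · intro t ht
    have hgu : (fun x => u t x) = fun x => Real.exp (-(Real.exp (-2 * β * x)) / (c * t)) := by
      funext x; exact hu t ht x
    rw [hgu]
    have h1 : Tendsto (fun x : ℝ => -2 * β * x) atTop atBot := by
      apply Tendsto.const_mul_atTop_of_neg (by linarith) tendsto_id
    have h2 : Tendsto (fun x : ℝ => Real.exp (-2 * β * x)) atTop (𝓝 0) :=
      Real.tendsto_exp_atBot.comp h1
    have h3 : Tendsto (fun x : ℝ => -(Real.exp (-2 * β * x)) / (c * t)) atTop (𝓝 0) := by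
      simpa using (h2.neg).div_const (c * t)
    have := (Real.continuous_exp.tendsto 0).comp h3
    simpa [Function.comp_def] using this
  · intro t ht
    have hgu : (fun x => u t x) = fun x => Real.exp (-(Real.exp (-2 * β * x)) / (c * t)) := by
      funext x; exact hu t ht x
    rw [hgu]
    have h1 : Tendsto (fun x : ℝ => -2 * β * x) atBot atTop := by
      apply Tendsto.const_mul_atBot_of_neg (by linarith) tendsto_id
    have h2 : Tendsto (fun x : ℝ => Real.exp (-2 * β * x)) atBot atTop :=
      Real.tendsto_exp_atTop.comp h1
    have h3 : Tendsto (fun x : ℝ => -(Real.exp (-2 * β * x)) / (c * t)) atBot atBot := by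
      have h2' := h2.atTop_div_const (mul_pos hc0 ht)
      simpa [Function.comp_def, neg_div] using tendsto_neg_atTop_atBot.comp h2'
    exact Real.tendsto_exp_atBot.comp h3
end

section
/- Fix α > 1, ξ > 0 and let Φ(x) = (2/√(2π)) ∫_x^∞ e^{-z²/2}dz. The function ū(t,ξ) = Φ(ξ^{1-α}/((α-1)√t)), for t > 0, ξ > 0, satisfies the PDE ∂ū/∂t = (1/2)ξ^{2α} ∂²ū/∂ξ² + (α/2)ξ^{2α-1} ∂ū/∂ξ on (0,∞)×(0,∞), with ū(t,ξ) → 0 as t ↓ 0 for fixed ξ > 0 and ū(t,ξ) → 1 as ξ → ∞ for fixed t > 0. -/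
open MeasureTheory Set Filter Topology Real

noncomputable def myc : ℝ := 2 / Real.sqrt (2 * π)

noncomputable def myf (z : ℝ) : ℝ := Real.exp (-z ^ 2 / 2)

lemma myf_cont : Continuous myf := by
  unfold myf; fun_prop

lemma myf_integrable : Integrable myf := by
  have h := integrable_exp_neg_mul_sq (by norm_num : (0:ℝ) < 1/2)
  refine h.congr ?_
  filter_upwards with z
  unfold myf
  ring_nf

lemma myf_Ioi_zero : ∫ z in Ioi (0:ℝ), myf z = Real.sqrt (2 * π) / 2 := by
  have h := integral_gaussian_Ioi (1/2)
  have h2 : ∀ z : ℝ, Real.exp (-(1/2) * z ^ 2) = myf z := by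
    intro z; unfold myf; ring_nf
  rw [show π / (1/2) = 2 * π by ring] at h
  rw [← h]
  exact setIntegral_congr_fun measurableSet_Ioi fun z _ => (h2 z).symm

lemma Phi_eq (Φ : ℝ → ℝ) (hΦ : ∀ x : ℝ, Φ x = (2 / Real.sqrt (2 * π)) *
      ∫ z in Ioi x, Real.exp (-z ^ 2 / 2)) (x : ℝ) :
    Φ x = myc * (∫ z in Ioi (0:ℝ), myf z) - myc * ∫ z in (0:ℝ)..x, myf z := by
  rw [hΦ x]
  have h1 : ∫ z in Ioi x, myf z = (∫ z in Ioi (0:ℝ), myf z) - ∫ z in (0:ℝ)..x, myf z := by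
    have e0 := intervalIntegral.integral_Iic_add_Ioi (b := (0:ℝ)) myf_integrable.integrableOn
      myf_integrable.integrableOn
    have ex := intervalIntegral.integral_Iic_add_Ioi (b := x) myf_integrable.integrableOn
      myf_integrable.integrableOn
    have es := intervalIntegral.integral_Iic_sub_Iic (f := myf) (μ := volume) (a := (0:ℝ)) (b := x)
      myf_integrable.integrableOn myf_integrable.integrableOn
    linarith
  rw [show (∫ z in Ioi x, Real.exp (-z ^ 2 / 2)) = ∫ z in Ioi x, myf z from rfl, h1, myc]
  ring

lemma Phi_hasDerivAt (Φ : ℝ → ℝ) (hΦ : ∀ x : ℝ, Φ x = (2 / Real.sqrt (2 * π)) *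
      ∫ z in Ioi x, Real.exp (-z ^ 2 / 2)) (x : ℝ) :
    HasDerivAt Φ (-myc * myf x) x := by
  have h := ((myf_cont.integral_hasStrictDerivAt 0 x).hasDerivAt.const_mul myc).const_sub
    (myc * ∫ z in Ioi (0:ℝ), myf z)
  have hfun : Φ = fun y => myc * (∫ z in Ioi (0:ℝ), myf z) - myc * ∫ z in (0:ℝ)..y, myf z :=
    funext (Phi_eq Φ hΦ)
  rw [hfun]
  simpa using h

lemma sqrt2pi_pos : (0:ℝ) < Real.sqrt (2 * π) := Real.sqrt_pos.mpr (by positivity)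

lemma Phi_zero (Φ : ℝ → ℝ) (hΦ : ∀ x : ℝ, Φ x = (2 / Real.sqrt (2 * π)) *
      ∫ z in Ioi x, Real.exp (-z ^ 2 / 2)) : Φ 0 = 1 := by
  rw [Phi_eq Φ hΦ 0, myf_Ioi_zero]
  simp [myc]
  exact Real.sqrt_ne_zero'.mpr Real.pi_pos

lemma Phi_tendsto_atTop (Φ : ℝ → ℝ) (hΦ : ∀ x : ℝ, Φ x = (2 / Real.sqrt (2 * π)) *
      ∫ z in Ioi x, Real.exp (-z ^ 2 / 2)) : Tendsto Φ atTop (𝓝 0) := by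
  have h1 : Tendsto (fun x => ∫ z in (0:ℝ)..x, myf z) atTop
      (𝓝 (∫ z in Ioi (0:ℝ), myf z)) :=
    intervalIntegral_tendsto_integral_Ioi 0 myf_integrable.integrableOn tendsto_id
  have h2 := (tendsto_const_nhds (x := myc * ∫ z in Ioi (0:ℝ), myf z)
    (f := atTop)).sub (h1.const_mul myc)
  rw [sub_self] at h2
  refine h2.congr fun x => ?_
  rw [Phi_eq Φ hΦ x]

lemma myphi_hasDerivAt (x : ℝ) :
    HasDerivAt (fun y => -myc * myf y) (-x * (-myc * myf x)) x := by
  have h1 : HasDerivAt (fun y : ℝ => -y ^ 2 / 2) (-x) x := by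
    have := ((hasDerivAt_pow 2 x).neg.div_const 2)
    refine this.congr_deriv ?_
    norm_num; ring
  have h2 := (h1.exp).const_mul (-myc)
  unfold myf
  refine h2.congr_deriv ?_
  ring

/-- For `α > 1`, with `Φ(x) = (2/√(2π)) ∫_x^∞ e^{-z²/2} dz`, the function
`ū(t,ξ) = Φ(ξ^{1-α}/((α-1)√t))` satisfies
`∂ū/∂t = (1/2) ξ^{2α} ∂²ū/∂ξ² + (α/2) ξ^{2α-1} ∂ū/∂ξ` on `(0,∞)×(0,∞)`,
with `ū(t,ξ) → 0` as `t ↓ 0` and `ū(t,ξ) → 1` as `ξ → ∞`. -/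
theorem stmt13 (α : ℝ) (hα : 1 < α)
    (Φ : ℝ → ℝ) (hΦ : ∀ x : ℝ, Φ x = (2 / Real.sqrt (2 * π)) *
      ∫ z in Ioi x, Real.exp (-z ^ 2 / 2))
    (u : ℝ → ℝ → ℝ)
    (hu : ∀ t > (0:ℝ), ∀ ξ > (0:ℝ),
      u t ξ = Φ (ξ ^ (1 - α) / ((α - 1) * Real.sqrt t))) :
    (∀ t > (0:ℝ), ∀ ξ > (0:ℝ),
      deriv (fun s => u s ξ) t =
        (1 / 2) * ξ ^ (2 * α) * deriv (deriv (fun y => u t y)) ξ +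
          (α / 2) * ξ ^ (2 * α - 1) * deriv (fun y => u t y) ξ) ∧
    (∀ ξ > (0:ℝ), Tendsto (fun t => u t ξ) (𝓝[>] 0) (𝓝 0)) ∧
    (∀ t > (0:ℝ), Tendsto (fun ξ => u t ξ) atTop (𝓝 1)) := by
  have hα1 : (0:ℝ) < α - 1 := by linarith
  refine ⟨?_, ?_, ?_⟩
  · -- PDE
    intro t ht ξ hξ
    have hst : Real.sqrt t * Real.sqrt t = t := Real.mul_self_sqrt ht.le
    have hstpos : 0 < Real.sqrt t := Real.sqrt_pos.mpr ht
    set G : ℝ := ξ ^ (1 - α) / ((α - 1) * Real.sqrt t) with hG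
    set B : ℝ := (1 - α) / ((α - 1) * Real.sqrt t) with hB
    -- time derivative of the inner function
    have hgt : HasDerivAt (fun s => ξ ^ (1 - α) / ((α - 1) * Real.sqrt s))
        (-G / (2 * t)) t := by
      have h : HasDerivAt (fun s : ℝ => ξ ^ (1 - α) / (α - 1) * (Real.sqrt s)⁻¹)
          (ξ ^ (1 - α) / (α - 1) * (-(1 / (2 * Real.sqrt t)) / Real.sqrt t ^ 2)) t :=
        ((Real.hasDerivAt_sqrt ht.ne').inv hstpos.ne').const_mul _
      have h2 : HasDerivAt (fun s : ℝ => ξ ^ (1 - α) / ((α - 1) * Real.sqrt s))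
          (ξ ^ (1 - α) / (α - 1) * (-(1 / (2 * Real.sqrt t)) / Real.sqrt t ^ 2)) t := by
        refine h.congr_of_eventuallyEq (Filter.Eventually.of_forall fun s => ?_)
        simp only [div_mul_eq_div_div, div_eq_mul_inv]
        rw [mul_inv, ← mul_assoc]
      convert h2 using 1
      rw [hG, Real.sq_sqrt ht.le]
      have hαne : α - 1 ≠ 0 := hα1.ne'
      have hsne : Real.sqrt t ≠ 0 := hstpos.ne'
      field_simp
      all_goals first
        | (left; ring)
        | ring
    have hut : HasDerivAt (fun s => u s ξ) (-myc * myf G * (-G / (2 * t))) t := by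
      have hcomp := (Phi_hasDerivAt Φ hΦ G).comp t hgt
      refine hcomp.congr_of_eventuallyEq ?_
      filter_upwards [Ioi_mem_nhds ht] with s hs
      exact hu s hs ξ hξ
    -- spatial derivative of the inner function
    have hgy : ∀ y : ℝ, 0 < y →
        HasDerivAt (fun y' : ℝ => y' ^ (1 - α) / ((α - 1) * Real.sqrt t))
          (B * y ^ (-α)) y := by
      intro y hy
      have h := (Real.hasDerivAt_rpow_const (x := y) (p := 1 - α)
        (Or.inl hy.ne')).div_const ((α - 1) * Real.sqrt t)
      refine h.congr_deriv ?_
      rw [show (1 - α) - 1 = -α by ring, hB]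
      ring
    set v : ℝ → ℝ :=
      fun y => -myc * myf (y ^ (1 - α) / ((α - 1) * Real.sqrt t)) * B * y ^ (-α) with hv
    have huy : ∀ y : ℝ, 0 < y → HasDerivAt (fun y' => u t y') (v y) y := by
      intro y hy
      have hcomp := (Phi_hasDerivAt Φ hΦ (y ^ (1 - α) / ((α - 1) * Real.sqrt t))).comp
        y (hgy y hy)
      have h2 : HasDerivAt (fun y' => u t y')
          (-myc * myf (y ^ (1 - α) / ((α - 1) * Real.sqrt t)) * (B * y ^ (-α))) y := by
        refine hcomp.congr_of_eventuallyEq ?_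
        filter_upwards [Ioi_mem_nhds hy] with z hz
        exact hu t ht z hz
      convert h2 using 1
      rw [hv]
      ring
    have hv' : HasDerivAt v
        (-G * (-myc * myf G) * (B * ξ ^ (-α)) * B * ξ ^ (-α)
          + -myc * myf G * B * (-α * ξ ^ (-α - 1))) ξ := by
      have h1 : HasDerivAt (fun y => -myc * myf (y ^ (1 - α) / ((α - 1) * Real.sqrt t)))
          (-G * (-myc * myf G) * (B * ξ ^ (-α))) ξ := by
        have h1' := (myphi_hasDerivAt G).comp ξ (hgy ξ hξ)
        exact h1'
      have h3 : HasDerivAt (fun y : ℝ => y ^ (-α)) (-α * ξ ^ (-α - 1)) ξ :=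
        Real.hasDerivAt_rpow_const (Or.inl hξ.ne')
      exact (h1.mul_const B).mul h3
    have hB2 : B * B * t = 1 := by
      have hden : ((α - 1) * Real.sqrt t) * ((α - 1) * Real.sqrt t) = (α - 1) ^ 2 * t := by
        rw [mul_mul_mul_comm, hst]; ring
      rw [hB, div_mul_div_comm, hden, div_mul_eq_mul_div,
        div_eq_one_iff_eq (by positivity)]
      ring
    clear_value G B
    have hGt : -G / (2 * t) = -(G * B * B) / 2 := by
      rw [div_eq_div_iff (by positivity) (by norm_num : (2:ℝ) ≠ 0)]
      linear_combination (2 * G) * hB2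
    have hd1 : deriv (fun s => u s ξ) t = -myc * myf G * (-(G * B * B) / 2) := by
      rw [hut.deriv, hGt]
    have hdv : deriv (fun y => u t y) ξ = v ξ := (huy ξ hξ).deriv
    have hdd : deriv (deriv (fun y => u t y)) ξ = deriv v ξ := by
      apply Filter.EventuallyEq.deriv_eq
      filter_upwards [Ioi_mem_nhds hξ] with y hy
      exact (huy y hy).deriv
    rw [hd1, hdd, hv'.deriv, hdv, hv]
    simp only []
    rw [← hG]
    have e1 : ξ ^ (2 * α) * ξ ^ (-α) * ξ ^ (-α) = 1 := by
      rw [← Real.rpow_add hξ, ← Real.rpow_add hξ,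
        show 2 * α + -α + -α = 0 by ring, Real.rpow_zero]
    have e2 : ξ ^ (2 * α) * ξ ^ (-α - 1) = ξ ^ (2 * α - 1) * ξ ^ (-α) := by
      rw [← Real.rpow_add hξ, ← Real.rpow_add hξ]
      ring_nf
    linear_combination (1 / 2 * G * (-myc * myf G) * B * B) * e1
      + (α / 2 * (-myc * myf G) * B) * e2
  · -- t → 0⁺
    intro ξ hξ
    have hξp : 0 < ξ ^ (1 - α) := Real.rpow_pos_of_pos hξ _
    have h1 : Tendsto (fun t : ℝ => (α - 1) * Real.sqrt t) (𝓝[>] 0) (𝓝[>] 0) := by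
      rw [tendsto_nhdsWithin_iff]
      constructor
      · have : Tendsto (fun t : ℝ => (α - 1) * Real.sqrt t) (𝓝 0) (𝓝 ((α - 1) * Real.sqrt 0)) :=
          (Real.continuous_sqrt.continuousAt.const_mul _)
        simpa using this.mono_left nhdsWithin_le_nhds
      · filter_upwards [self_mem_nhdsWithin] with t ht
        have h0 : 0 < Real.sqrt t := Real.sqrt_pos.mpr ht
        exact mem_Ioi.mpr (by positivity)
    have h2 : Tendsto (fun t : ℝ => ξ ^ (1 - α) / ((α - 1) * Real.sqrt t)) (𝓝[>] 0) atTop := by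
      simp only [div_eq_mul_inv]
      exact (tendsto_inv_nhdsGT_zero.comp h1).const_mul_atTop hξp
    have h3 := (Phi_tendsto_atTop Φ hΦ).comp h2
    refine h3.congr' ?_
    filter_upwards [self_mem_nhdsWithin] with t ht
    exact (hu t ht ξ hξ).symm
  · -- ξ → ∞
    intro t ht
    have h1 : Tendsto (fun ξ : ℝ => ξ ^ (1 - α)) atTop (𝓝 0) := by
      have := tendsto_rpow_neg_atTop (y := α - 1) hα1
      simpa [show -(α - 1) = 1 - α by ring] using this
    have h2 : Tendsto (fun ξ : ℝ => ξ ^ (1 - α) / ((α - 1) * Real.sqrt t)) atTop (𝓝 0) := by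
      simpa using h1.div_const ((α - 1) * Real.sqrt t)
    have hcont : ContinuousAt Φ 0 := (Phi_hasDerivAt Φ hΦ 0).continuousAt
    have h3 := (hcont.tendsto.comp h2)
    rw [Phi_zero Φ hΦ] at h3
    refine h3.congr' ?_
    filter_upwards [eventually_gt_atTop (0:ℝ)] with ξ hξ
    exact (hu t ht ξ hξ).symm
end

section
/- Let b:ℝ→(0,∞) be continuous, non-decreasing with ∫_{x₀}^∞ ds/b(s) < ∞, and let g:[0,∞)→ℝ be continuous with g(0)=0. Suppose X solves X_t = x₀ + ∫_0^t b(X_s)ds + g(t) on [0,T) and M = sup_{0≤t≤T}|g(t)| < ∞. If y solves y'(t) = b(y(t)), y(0) = x₀ + M + 1, then the blow-up time T_y = ∫_{x₀+M+1}^∞ ds/b(s) of y satisfies: whenever X blows up at time T, one has T_y ≤ T, i.e. T ≥ ∫_{x₀+M+1}^∞ ds/b(s). -/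
open MeasureTheory Set Filter Topology intervalIntegral

/-- Lower bound for the blow-up time via Osgood: if `X` solves
`X_t = x₀ + ∫_0^t b(X_s) ds + g(t)` on `[0,T)` and blows up at `T`, with
`M = sup_{0 ≤ t ≤ T} |g(t)|`, then `T ≥ ∫_{x₀+M+1}^∞ ds/b(s)`, the Osgood blow-up
time of `y' = b(y)`, `y(0) = x₀ + M + 1`. -/
theorem stmt19
    (b : ℝ → ℝ) (hb_cont : Continuous b) (hb_pos : ∀ x, 0 < b x)
    (hb_mono : Monotone b) (x₀ : ℝ)
    (hOsg : IntegrableOn (fun s => 1 / b s) (Ioi x₀))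
    (g : ℝ → ℝ) (hg_cont : ContinuousOn g (Ici 0)) (hg0 : g 0 = 0)
    (T : ℝ) (hT : 0 < T)
    (X : ℝ → ℝ) (hX_cont : ContinuousOn X (Ico 0 T))
    (hX_eq : ∀ t ∈ Ico (0:ℝ) T, X t = x₀ + (∫ s in (0:ℝ)..t, b (X s)) + g t)
    (M : ℝ) (hM : IsLUB ((fun t => |g t|) '' Icc 0 T) M)
    (hX_blow : Tendsto X (𝓝[<] T) atTop) :
    (∫ s in Ioi (x₀ + M + 1), 1 / b s) ≤ T := by
  have hM0 : 0 ≤ M := by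
    have : |g 0| ≤ M := hM.1 ⟨0, ⟨le_rfl, hT.le⟩, rfl⟩
    simpa [hg0] using this
  set c : ℝ := x₀ + M + 1 with hc
  have hcx : x₀ < c := by simp only [hc]; linarith
  have hIntc : IntegrableOn (fun s => 1 / b s) (Ioi c) :=
    hOsg.mono (Ioi_subset_Ioi hcx.le) le_rfl
  have hinv_cont : Continuous (fun s => 1 / b s) :=
    continuous_const.div hb_cont fun x => (hb_pos x).ne'
  -- the function F x = ∫_c^x ds / b(s)
  set F : ℝ → ℝ := fun x => ∫ s in c..x, 1 / b s with hFdef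
  have hF_deriv : ∀ x, HasDerivAt F (1 / b x) x := by
    intro x
    exact intervalIntegral.integral_hasDerivAt_right
      (hinv_cont.intervalIntegrable _ _)
      ⟨univ, univ_mem, (hinv_cont.aestronglyMeasurable).restrict⟩
      hinv_cont.continuousAt
  have hF_mono : Monotone F := by
    apply monotone_of_deriv_nonneg (fun x => (hF_deriv x).differentiableAt)
    intro x
    rw [(hF_deriv x).deriv]
    have := hb_pos x
    positivity
  -- the primitive h and the dominating function Z
  set p : ℝ → ℝ := fun t => ∫ s in (0:ℝ)..t, b (X s) with hpdef
  set Z : ℝ → ℝ := fun t => c + p t with hZdef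
  have hbX_cont : ContinuousOn (fun s => b (X s)) (Ico 0 T) :=
    hb_cont.comp_continuousOn hX_cont
  have hXZ : ∀ t ∈ Ico (0:ℝ) T, X t + 1 ≤ Z t := by
    intro t ht
    have hg_le : g t ≤ M :=
      le_trans (le_abs_self _) (hM.1 ⟨t, ⟨ht.1, ht.2.le⟩, rfl⟩)
    have heq := hX_eq t ht
    simp only [hZdef, hpdef, hc]
    linarith
  -- key estimate : F (Z t) ≤ t for t ∈ [0, T)
  have hkey : ∀ t ∈ Ico (0:ℝ) T, F (Z t) ≤ t := by
    intro t₁ ht₁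
    have hIccsub : Icc (0:ℝ) t₁ ⊆ Ico 0 T := fun s hs => ⟨hs.1, lt_of_le_of_lt hs.2 ht₁.2⟩
    -- continuity of p (hence Z) on Icc 0 t₁
    have hp_cont : ContinuousOn p (Icc 0 t₁) := by
      have : IntegrableOn (fun s => b (X s)) (uIcc 0 t₁) := by
        rw [uIcc_of_le ht₁.1]
        exact (hbX_cont.mono hIccsub).integrableOn_Icc
      simpa [uIcc_of_le ht₁.1] using
        intervalIntegral.continuousOn_primitive_interval this
    have hF_cont : Continuous F :=
      Differentiable.continuous fun x => (hF_deriv x).differentiableAt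
    -- derivative of ψ t = t - F (Z t) on the interior
    have hasDerivψ : ∀ s ∈ Ioo (0:ℝ) t₁,
        HasDerivAt (fun t => t - F (Z t)) (1 - 1 / b (Z s) * b (X s)) s := by
      intro s hs
      have hsT : s ∈ Ioo (0:ℝ) T := ⟨hs.1, hs.2.trans ht₁.2⟩
      have hnhds : Ioo (0:ℝ) T ∈ 𝓝 s := Ioo_mem_nhds hsT.1 hsT.2
      have hbX_at : ContinuousAt (fun u => b (X u)) s :=
        (hbX_cont.mono Ioo_subset_Ico_self).continuousAt hnhds
      have hmeas : StronglyMeasurableAtFilter (fun u => b (X u)) (𝓝 s) :=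
        ⟨Ioo 0 T, hnhds,
          ((hbX_cont.mono Ioo_subset_Ico_self).aestronglyMeasurable
            measurableSet_Ioo)⟩
      have hint : IntervalIntegrable (fun u => b (X u)) volume 0 s := by
        apply ContinuousOn.intervalIntegrable
        rw [uIcc_of_le hsT.1.le]
        exact hbX_cont.mono fun u hu => ⟨hu.1, lt_of_le_of_lt hu.2 hsT.2⟩
      have hp_deriv : HasDerivAt p (b (X s)) s :=
        intervalIntegral.integral_hasDerivAt_right hint hmeas hbX_at
      have hZ_deriv : HasDerivAt Z (b (X s)) s := hp_deriv.const_add c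
      have hFZ : HasDerivAt (fun t => F (Z t)) (1 / b (Z s) * b (X s)) s :=
        (hF_deriv (Z s)).comp s hZ_deriv
      simpa using (hasDerivAt_id' s).fun_sub hFZ
    -- the auxiliary function ψ t = t - F (Z t) is monotone on [0, t₁]
    have hmono : MonotoneOn (fun t => t - F (Z t)) (Icc 0 t₁) := by
      apply monotoneOn_of_deriv_nonneg (convex_Icc _ _)
      · exact (continuousOn_id.sub
          (hF_cont.comp_continuousOn (continuousOn_const.add hp_cont)))
      · intro s hs
        rw [interior_Icc] at hs
        exact ((hasDerivψ s hs).differentiableAt).differentiableWithinAt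
      · intro s hs
        rw [interior_Icc] at hs
        rw [(hasDerivψ s hs).deriv]
        have hsT : s ∈ Ico (0:ℝ) T := hIccsub ⟨hs.1.le, hs.2.le⟩
        have hXle : X s ≤ Z s := by linarith [hXZ s hsT]
        have hble : b (X s) ≤ b (Z s) := hb_mono hXle
        have hbZ : 0 < b (Z s) := hb_pos _
        have : 1 / b (Z s) * b (X s) ≤ 1 := by
          rw [one_div, inv_mul_eq_div, div_le_one hbZ]
          exact hble
        linarith
    have h0 : (0:ℝ) ∈ Icc (0:ℝ) t₁ := ⟨le_rfl, ht₁.1⟩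
    have h1 : t₁ ∈ Icc (0:ℝ) t₁ := ⟨ht₁.1, le_rfl⟩
    have := hmono h0 h1 ht₁.1
    have hp0 : p 0 = 0 := intervalIntegral.integral_same
    have hFc : F c = 0 := intervalIntegral.integral_same
    simp only [hZdef, hp0, add_zero, hFc, sub_zero] at this
    linarith
  -- Z blows up at T, so F x ≤ T for every x
  have hZ_blow : Tendsto Z (𝓝[<] T) atTop := by
    have hXp : Tendsto (fun t => X t + 1) (𝓝[<] T) atTop :=
      tendsto_atTop_add_const_right _ 1 hX_blow
    refine tendsto_atTop_mono' _ ?_ hXp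
    filter_upwards [Ioo_mem_nhdsLT_of_mem (⟨hT, le_rfl⟩ : T ∈ Ioc 0 T)] with t ht
    exact hXZ t ⟨ht.1.le, ht.2⟩
  have hFT : ∀ x, F x ≤ T := by
    intro x
    have h1 : ∀ᶠ t in 𝓝[<] T, x ≤ Z t := hZ_blow.eventually_ge_atTop x
    have h2 : Ioo (0:ℝ) T ∈ 𝓝[<] T := Ioo_mem_nhdsLT_of_mem ⟨hT, le_rfl⟩
    obtain ⟨t, hxt, ht⟩ := (h1.and h2).exists
    calc F x ≤ F (Z t) := hF_mono hxt
    _ ≤ t := hkey t ⟨ht.1.le, ht.2⟩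
    _ ≤ T := ht.2.le
  have hlim : Tendsto (fun i => ∫ s in c..i, 1 / b s) atTop
      (𝓝 (∫ s in Ioi c, 1 / b s)) :=
    intervalIntegral_tendsto_integral_Ioi c hIntc tendsto_id
  exact le_of_tendsto hlim (Eventually.of_forall hFT)
end
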